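/- For every permutation σ of [n], for each k, k ∈ Ene(σ) ⟺ n+1-k ∈ Ẽne(θ̂(σ)), where Ẽne is the analogous 'tilde' set; consequently ene(σ) = ẽne(θ̂(σ)). -/
import Mathlib

namespace Paper

variable {n : ℕ}

def pv (i : Fin n) : ℕ := (i : ℕ) + 1

def valAt (f : Fin n → Fin n) (k : ℕ) : ℕ :=
  if h : 1 ≤ k ∧ k ≤ n then ((f ⟨k - 1, by omega⟩ : Fin n) : ℕ) + 1 else 0

def hatTheta (f : Fin n → Fin n) (i : Fin n) : Fin n :=
  if ((f i.rev : ℕ)) = n - 1 then f i.rev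
  else ⟨n - 2 - (f i.rev : ℕ), by have := i.isLt; omega⟩

end Paper

namespace Paper

variable {n : ℕ}

def EneSet (f : Fin n → Fin n) : Finset (Fin n) :=
  Finset.univ.filter (fun j : Fin n => ∃ i : Fin n,
    pv i < pv j ∧ pv j ≤ valAt f (pv j) ∧
    valAt f (pv j) < valAt f (pv i) ∧ valAt f (pv i) = n)

def EtneSet (f : Fin n → Fin n) : Finset (Fin n) :=
  Finset.univ.filter (fun j : Fin n => ∃ i : Fin n,
    valAt f (pv j) < pv j ∧ pv j < pv i ∧
    pv i ≤ valAt f (pv i) ∧ valAt f (pv i) = n)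

lemma valAt_pv (f : Fin n → Fin n) (j : Fin n) : valAt f ((j : ℕ) + 1) = (f j : ℕ) + 1 := by
  have hj := j.isLt
  rw [valAt, dif_pos ⟨by omega, by omega⟩]
  have : (⟨(j : ℕ) + 1 - 1, by omega⟩ : Fin n) = j := Fin.ext (by simp)
  rw [this]

lemma hatTheta_val (f : Fin n → Fin n) (j : Fin n) :
    ((hatTheta f j : ℕ)) = if (f j.rev : ℕ) = n - 1 then n - 1 else n - 2 - (f j.rev : ℕ) := by
  unfold hatTheta
  split <;> simp [*]

/-- k ∈ Ene(σ) ⟺ n+1-k ∈ Ẽne(θ̂(σ)); consequently ene(σ) = ẽne(θ̂(σ)). -/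
theorem Ene_hatTheta (n : ℕ) (σ : Equiv.Perm (Fin n)) :
    (∀ k : Fin n, k ∈ EneSet ⇑σ ↔ k.rev ∈ EtneSet (hatTheta ⇑σ)) ∧
    (EneSet ⇑σ).card = (EtneSet (hatTheta ⇑σ)).card := by
  have key : ∀ k : Fin n, k ∈ EneSet ⇑σ ↔ k.rev ∈ EtneSet (hatTheta ⇑σ) := by
    intro k
    have hk := k.isLt
    simp only [EneSet, EtneSet, Finset.mem_filter, Finset.mem_univ, true_and, pv, valAt_pv]
    constructor
    · rintro ⟨i, h1, h2, h3, h4⟩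
      have hi := i.isLt
      refine ⟨i.rev, ?_, ?_, ?_, ?_⟩
      · rw [hatTheta_val, Fin.rev_rev]
        have hne : (σ k : ℕ) ≠ n - 1 := by omega
        rw [if_neg hne, Fin.val_rev]
        omega
      · rw [Fin.val_rev, Fin.val_rev]; omega
      · rw [hatTheta_val, Fin.rev_rev, if_pos (by omega), Fin.val_rev]; omega
      · rw [hatTheta_val, Fin.rev_rev, if_pos (by omega)]; omega
    · rintro ⟨i, h1, h2, h3, h4⟩
      have hi := i.isLt
      have hsk := (σ k).isLt
      have hsir := (σ i.rev).isLt
      rw [hatTheta_val, Fin.rev_rev] at h1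
      rw [hatTheta_val] at h3 h4
      have hkrv : (k.rev : ℕ) = n - ((k : ℕ) + 1) := Fin.val_rev k
      rw [hkrv] at h1 h2
      have hii : 0 < (i : ℕ) := by omega
      have hir : (σ i.rev : ℕ) = n - 1 := by
        by_contra hne
        rw [if_neg hne] at h4
        omega
      rw [if_pos hir] at h4
      have hne : (σ k : ℕ) ≠ n - 1 := by
        intro h; rw [if_pos h] at h1; omega
      rw [if_neg hne] at h1
      have hrv : (i.rev : ℕ) = n - ((i : ℕ) + 1) := Fin.val_rev i
      refine ⟨i.rev, ?_, ?_, ?_, ?_⟩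
      · omega
      · omega
      · omega
      · omega
  refine ⟨key, ?_⟩
  apply Finset.card_nbij' (fun k => k.rev) (fun k => k.rev)
  · intro k hk; exact (key k).1 hk
  · intro k hk; exact (key k.rev).2 (by rwa [Fin.rev_rev])
  · intro k _; exact Fin.rev_rev k
  · intro k _; exact Fin.rev_rev k

end Paper
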